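/- Let (X₁, X₂) be a pair of identically distributed log-normal random variables, X₁ ≍ X₂ ~ LN(μ, σ²), and let S⁻ be their counter-monotonic sum. Then for every p ∈ (0,1), TVaR_p[S⁻] = (2 e^{μ + σ²/2}/(1 − p)) · [Φ(Φ^{-1}((1−p)/2) − σ) + Φ(Φ^{-1}((1−p)/2) + σ)], where Φ is the standard normal cdf and Φ^{-1} its inverse. -/

import Mathlib

open MeasureTheory ProbabilityTheory Set

noncomputable section

variable {Ω : Type*} [MeasurableSpace Ω]

/-- The cumulative distribution function of the random variable `X` under `P`. -/
def rvCdf (P : Measure Ω) (X : Ω → ℝ) : ℝ → ℝ := fun x => (P {ω | X ω ≤ x}).toReal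

/-- The survival function `x ↦ P(X > x)`. -/
def rvSurv (P : Measure Ω) (X : Ω → ℝ) : ℝ → ℝ := fun x => (P {ω | x < X ω}).toReal

/-- The left inverse `F⁻¹(p) = inf {x | F x ≥ p}` of a cdf `F`. -/
def leftInv (F : ℝ → ℝ) (p : ℝ) : ℝ := sInf {x | p ≤ F x}

/-- The right inverse `F⁻¹⁺(p) = sup {x | F x ≤ p}` of a cdf `F`. -/
def rightInv (F : ℝ → ℝ) (p : ℝ) : ℝ := sSup {x | F x ≤ p}

/-- `g : [0,1] → [0,1]` is a distortion function: nondecreasing with `g 0 = 0`, `g 1 = 1`. -/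
def IsDistortion (g : ℝ → ℝ) : Prop :=
  MonotoneOn g (Icc 0 1) ∧ g 0 = 0 ∧ g 1 = 1 ∧ ∀ q ∈ Icc (0:ℝ) 1, g q ∈ Icc (0:ℝ) 1

/-- The dual distortion function `ḡ(q) = 1 - g(1 - q)`. -/
def dualDistortion (g : ℝ → ℝ) : ℝ → ℝ := fun q => 1 - g (1 - q)

/-- The distortion risk measure
`ρ_g[X] = -∫_{-∞}^0 (1 - g(P(X > x))) dx + ∫_0^∞ g(P(X > x)) dx`. -/
def rho (P : Measure Ω) (g : ℝ → ℝ) (X : Ω → ℝ) : ℝ :=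
  (- ∫ x in Iio (0:ℝ), (1 - g (rvSurv P X x))) + ∫ x in Ioi (0:ℝ), g (rvSurv P X x)

/-- The two integrals defining the distortion risk measure `ρ_g[X]` are finite. -/
def RhoFinite (P : Measure Ω) (g : ℝ → ℝ) (X : Ω → ℝ) : Prop :=
  IntegrableOn (fun x => 1 - g (rvSurv P X x)) (Iio (0:ℝ)) volume ∧
  IntegrableOn (fun x => g (rvSurv P X x)) (Ioi (0:ℝ)) volume

/-- `U` is uniformly distributed on `[0,1]`. -/
def IsUniform01 (P : Measure Ω) (U : Ω → ℝ) : Prop :=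
  Measurable U ∧ Measure.map U P = volume.restrict (Icc (0:ℝ) 1)

/-- The counter-monotonic sum `S⁻ = F_{X₁}⁻¹(U) + F_{X₂}⁻¹(1 - U)`. -/
def cmSum (P : Measure Ω) (X₁ X₂ : Ω → ℝ) (U : Ω → ℝ) : Ω → ℝ :=
  fun ω => leftInv (rvCdf P X₁) (U ω) + leftInv (rvCdf P X₂) (1 - U ω)

/-- `X` is symmetric: for some `m`, `P(X ≤ m - x) = P(X ≥ m + x)` for all `x`. -/
def IsSymmetricRV (P : Measure Ω) (X : Ω → ℝ) : Prop :=
  ∃ m : ℝ, ∀ x : ℝ, P {ω | X ω ≤ m - x} = P {ω | m + x ≤ X ω}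

/-- Dispersive order `X ≤_disp Y`. -/
def DispLE (P : Measure Ω) (X Y : Ω → ℝ) : Prop :=
  ∀ u v : ℝ, 0 < v → v ≤ u → u < 1 →
    leftInv (rvCdf P X) u - leftInv (rvCdf P X) v ≤
      leftInv (rvCdf P Y) u - leftInv (rvCdf P Y) v

/-- The cdf of `X` is continuous and strictly increasing on `(F⁻¹⁺(0), F⁻¹(1))`. -/
def CdfRegular (P : Measure Ω) (X : Ω → ℝ) : Prop :=
  ContinuousOn (rvCdf P X) (Ioo (rightInv (rvCdf P X) 0) (leftInv (rvCdf P X) 1)) ∧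
  StrictMonoOn (rvCdf P X) (Ioo (rightInv (rvCdf P X) 0) (leftInv (rvCdf P X) 1))

/-- Value-at-Risk `VaR_p[X] = F_X⁻¹(p)`. -/
def VaR (P : Measure Ω) (X : Ω → ℝ) (p : ℝ) : ℝ := leftInv (rvCdf P X) p

/-- Tail-Value-at-Risk `TVaR_p[X] = (1/(1-p)) ∫_p^1 F_X⁻¹(q) dq`. -/
def TVaR (P : Measure Ω) (X : Ω → ℝ) (p : ℝ) : ℝ :=
  (1 - p)⁻¹ * ∫ q in p..1, leftInv (rvCdf P X) q

/-- Left-Tail-Value-at-Risk `LTVaR_p[X] = (1/p) ∫_0^p F_X⁻¹(q) dq`. -/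
def LTVaR (P : Measure Ω) (X : Ω → ℝ) (p : ℝ) : ℝ :=
  p⁻¹ * ∫ q in (0:ℝ)..p, leftInv (rvCdf P X) q

/-- The standard normal cdf `Φ`. -/
def stdNormCdf : ℝ → ℝ := fun x => ((gaussianReal 0 1) (Iic x)).toReal

/-- The inverse `Φ⁻¹` of the standard normal cdf. -/
def stdNormInv : ℝ → ℝ := fun p => sInf {x | p ≤ stdNormCdf x}

/-- The Wang transform distortion function at level `p`. -/
def wangG (p : ℝ) : ℝ → ℝ := fun q => stdNormCdf (stdNormInv q + stdNormInv p)

/-- The Wang transform risk measure at level `p`. -/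
def WT (P : Measure Ω) (X : Ω → ℝ) (p : ℝ) : ℝ := rho P (wangG p) X

/-- `X ~ N(μ, σ²)`. -/
def IsNormalRV (P : Measure Ω) (X : Ω → ℝ) (μ σ : ℝ) : Prop :=
  Measurable X ∧ Measure.map X P = gaussianReal μ (⟨σ ^ 2, sq_nonneg σ⟩ : NNReal)

/-- `X ~ LN(μ, σ²)`, i.e. `X` is distributed as `exp Z` with `Z ~ N(μ, σ²)`. -/
def IsLogNormalRV (P : Measure Ω) (X : Ω → ℝ) (μ σ : ℝ) : Prop :=
  Measurable X ∧
    Measure.map X P = Measure.map Real.exp (gaussianReal μ (⟨σ ^ 2, sq_nonneg σ⟩ : NNReal))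

/-- `X ~ Student(ν)`: density proportional to `(1 + x²/ν)^(-(ν+1)/2)`. -/
def IsStudentRV (P : Measure Ω) (X : Ω → ℝ) (ν : ℝ) : Prop :=
  Measurable X ∧ ∃ c : ℝ, 0 < c ∧
    Measure.map X P =
      volume.withDensity (fun x => ENNReal.ofReal (c * (1 + x ^ 2 / ν) ^ (-((ν + 1) / 2))))

/-- Extension of a distortion function to `ℝ` by constants. -/
def gExt (g : ℝ → ℝ) : ℝ → ℝ := fun q => if q ≤ 0 then 0 else if 1 ≤ q then 1 else g q

open Classical in
/-- The Lebesgue–Stieltjes measure `dg` associated with (the right-continuous modification of)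
the extension of a distortion function `g` to `ℝ`. -/
def lsMeasure (g : ℝ → ℝ) : Measure ℝ :=
  if h : Monotone (gExt g) then h.stieltjesFunction.measure else 0

/-!
For `q ∈ (0,1)` the `q`-quantile of `LN(μ, σ²)` is `exp (μ + σ Φ⁻¹(q))`, and `Φ⁻¹(1 - q) = -Φ⁻¹(q)`.
Hence almost surely `S⁻ = ψ(Z)` with `Z = Φ⁻¹(U)` standard normal and
`ψ(z) = e^{μ+σz} + e^{μ-σz} = 2 e^μ cosh(σz)`. As `ψ` is even and increasing in `|z|`,
`P(S⁻ ≤ ψ(b)) = P(|Z| ≤ b) = 2Φ(b) - 1`, so the `q`-quantile of `S⁻` is `ψ(Φ⁻¹((1 + q)/2))`.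
The substitutions `r = (1 + q)/2` and `r = Φ(z)` turn `∫_p^1` of it into
`2 E[ψ(Z); Z > Φ⁻¹((1 + p)/2)]`, and the exponential tilt `e^{cz} φ(z) = e^{c²/2} φ(z - c)`
evaluates both Gaussian tail integrals.
-/

theorem leftInv_eq_of_forall_le_iff {F : ℝ → ℝ} {q y : ℝ} (h : ∀ t, y ≤ t ↔ q ≤ F t) :
    leftInv F q = y := by
  have hset : {x | q ≤ F x} = Ici y := by ext t; exact (h t).symm
  rw [leftInv, hset, csInf_Ici]

namespace StrictMono

variable {F : ℝ → ℝ}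

theorem leftInv_apply (hF : StrictMono F) (x : ℝ) : leftInv F (F x) = x :=
  leftInv_eq_of_forall_le_iff fun _ => hF.le_iff_le.symm

theorem leftInv_le_iff (hF : StrictMono F) {u : ℝ} (hu : u ∈ range F) (t : ℝ) :
    leftInv F u ≤ t ↔ u ≤ F t := by
  obtain ⟨x, rfl⟩ := hu
  rw [hF.leftInv_apply, hF.le_iff_le]

theorem apply_leftInv (hF : StrictMono F) {u : ℝ} (hu : u ∈ range F) : F (leftInv F u) = u := by
  obtain ⟨x, rfl⟩ := hu
  rw [hF.leftInv_apply]

end StrictMono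

namespace ProbabilityTheory

variable {ν : Measure ℝ} [IsProbabilityMeasure ν]

theorem continuous_cdf [NullSingletonClass ν] : Continuous (cdf ν) := by
  refine continuous_iff_continuousAt.2 fun x => continuousAt_iff_continuous_left_right.2
    ⟨?_, (cdf ν).right_continuous x⟩
  rw [continuousWithinAt_Iio_iff_Iic.symm, (monotone_cdf ν).continuousWithinAt_Iio_iff_leftLim_eq]
  have hatom := (cdf ν).measure_singleton x
  rw [measure_cdf, measure_singleton, eq_comm, ENNReal.ofReal_eq_zero, sub_nonpos] at hatom
  exact le_antisymm ((monotone_cdf ν).leftLim_le le_rfl) hatom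

theorem strictMono_cdf_of_absolutelyContinuous (h : volume ≪ ν) : StrictMono (cdf ν) := by
  intro x y hxy
  have hpos : 0 < ν (Ioc x y) := h.pos_mono (by simp [hxy])
  rw [← measure_cdf (μ := ν), StieltjesFunction.measure_Ioc, ENNReal.ofReal_pos, sub_pos] at hpos
  exact hpos

end ProbabilityTheory

local notation "γ" => gaussianReal 0 1

theorem stdNormCdf_eq_cdf : stdNormCdf = cdf γ := by
  ext x
  rw [cdf_eq_real]
  rfl

theorem strictMono_stdNormCdf : StrictMono stdNormCdf := by
  rw [stdNormCdf_eq_cdf]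
  exact strictMono_cdf_of_absolutelyContinuous (gaussianReal_absolutelyContinuous' 0 one_ne_zero)

theorem continuous_stdNormCdf : Continuous stdNormCdf := by
  have := nullSingletonClass_gaussianReal (μ := 0) one_ne_zero
  rw [stdNormCdf_eq_cdf]
  exact continuous_cdf

theorem range_stdNormCdf : range stdNormCdf = Ioo 0 1 := by
  refine Subset.antisymm ?_ fun u hu => ?_
  · rintro _ ⟨x, rfl⟩
    have hlt := strictMono_stdNormCdf (sub_one_lt x)
    have hgt := strictMono_stdNormCdf (lt_add_one x)
    rw [stdNormCdf_eq_cdf] at hlt hgt ⊢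
    exact ⟨(cdf_nonneg _ _).trans_lt hlt, hgt.trans_le (cdf_le_one _ _)⟩
  · have hcont := continuous_stdNormCdf
    rw [stdNormCdf_eq_cdf] at hcont ⊢
    exact mem_range_of_exists_le_of_exists_ge hcont
      ((tendsto_cdf_atBot γ).eventually_le_const hu.1).exists
      ((tendsto_cdf_atTop γ).eventually_const_le hu.2).exists

theorem stdNormCdf_neg (x : ℝ) : stdNormCdf (-x) = 1 - stdNormCdf x := by
  have := nullSingletonClass_gaussianReal (μ := 0) one_ne_zero
  have hsymm : (γ).map (fun x => -x) = γ := by simpa using gaussianReal_map_neg (μ := 0) (v := 1)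
  calc stdNormCdf (-x) = ((γ).map fun x => -x).real (Iic (-x)) := by rw [hsymm]; rfl
    _ = (γ).real (Iio x)ᶜ := by
      rw [map_measureReal_apply measurable_neg measurableSet_Iic, compl_Iio]
      congr 1; ext; simp
    _ = 1 - stdNormCdf x := by
      rw [probReal_compl_eq_one_sub measurableSet_Iio, measureReal_congr Iio_ae_eq_Iic]
      rfl

theorem stdNormCdf_zero : stdNormCdf 0 = 1 / 2 := by
  have h := stdNormCdf_neg 0
  rw [neg_zero] at h
  linarith

theorem stdNormInv_le_iff {u : ℝ} (hu : u ∈ Ioo 0 1) (t : ℝ) :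
    stdNormInv u ≤ t ↔ u ≤ stdNormCdf t :=
  strictMono_stdNormCdf.leftInv_le_iff (range_stdNormCdf ▸ hu) t

theorem stdNormCdf_stdNormInv {u : ℝ} (hu : u ∈ Ioo 0 1) : stdNormCdf (stdNormInv u) = u :=
  strictMono_stdNormCdf.apply_leftInv (range_stdNormCdf ▸ hu)

theorem stdNormInv_stdNormCdf (x : ℝ) : stdNormInv (stdNormCdf x) = x :=
  strictMono_stdNormCdf.leftInv_apply x

theorem stdNormInv_one_sub {u : ℝ} (hu : u ∈ Ioo 0 1) : stdNormInv (1 - u) = -stdNormInv u := by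
  conv_lhs => rw [← stdNormCdf_stdNormInv hu, ← stdNormCdf_neg, stdNormInv_stdNormCdf]

theorem stdGaussian_real_Ioi (a : ℝ) : (γ).real (Ioi a) = stdNormCdf (-a) := by
  rw [← compl_Iic, probReal_compl_eq_one_sub measurableSet_Iic, stdNormCdf_neg]
  rfl

theorem stdGaussian_real_Ioc_neg {c : ℝ} (hc : 0 ≤ c) :
    (γ).real (Ioc (-c) c) = 2 * stdNormCdf c - 1 := by
  rw [measureReal_def, ← measure_cdf (μ := γ), StieltjesFunction.measure_Ioc,
    ENNReal.toReal_ofReal (sub_nonneg.2 (monotone_cdf _ (by linarith))), ← stdNormCdf_eq_cdf,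
    stdNormCdf_neg]
  ring

theorem monotoneOn_stdNormInv : MonotoneOn stdNormInv (Ioo 0 1) := fun u hu v hv huv => by
  rw [stdNormInv_le_iff hu, stdNormCdf_stdNormInv hv]
  exact huv

theorem hasLaw_stdNormInv : HasLaw stdNormInv γ (volume.restrict (Ioo 0 1)) := by
  have hmeas : AEMeasurable stdNormInv (volume.restrict (Ioo (0 : ℝ) 1)) :=
    aemeasurable_restrict_of_monotoneOn measurableSet_Ioo monotoneOn_stdNormInv
  refine ⟨hmeas, Measure.ext_of_Iic _ _ fun t => ?_⟩
  have hpre : stdNormInv ⁻¹' Iic t ∩ Ioo 0 1 = Ioc 0 (stdNormCdf t) := by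
    ext u
    simp only [mem_inter_iff, mem_preimage, mem_Iic, mem_Ioo, mem_Ioc]
    constructor
    · rintro ⟨h, hu⟩
      exact ⟨hu.1, (stdNormInv_le_iff hu t).1 h⟩
    · rintro ⟨hu0, hut⟩
      have hu : u ∈ Ioo 0 1 := ⟨hu0, hut.trans_lt (range_stdNormCdf ▸ mem_range_self t).2⟩
      exact ⟨(stdNormInv_le_iff hu t).2 hut, hu⟩
  rw [Measure.map_apply_of_aemeasurable hmeas measurableSet_Iic,
    Measure.restrict_apply' measurableSet_Ioo, hpre, Real.volume_Ioc, sub_zero, stdNormCdf,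
    ENNReal.ofReal_toReal (measure_ne_top _ _)]

theorem integral_stdNormInv_eq_setIntegral_Ioi {u : ℝ} (hu : u ∈ Ioo 0 1) {f : ℝ → ℝ}
    (hf : AEStronglyMeasurable f γ) :
    ∫ r in u..1, f (stdNormInv r) = ∫ x in Ioi (stdNormInv u), f x ∂γ := by
  have hpre : stdNormInv ⁻¹' Ioi (stdNormInv u) ∩ Ioo 0 1 = Ioo u 1 := by
    ext r
    simp only [mem_inter_iff, mem_preimage, mem_Ioi, mem_Ioo]
    constructor
    · rintro ⟨h, hr⟩
      refine ⟨?_, hr.2⟩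
      rwa [← not_le, stdNormInv_le_iff hr, stdNormCdf_stdNormInv hu, not_le] at h
    · rintro ⟨hur, hr1⟩
      have hr : r ∈ Ioo 0 1 := ⟨hu.1.trans hur, hr1⟩
      refine ⟨?_, hr⟩
      rwa [← not_le, stdNormInv_le_iff hr, stdNormCdf_stdNormInv hu, not_le]
  rw [← hasLaw_stdNormInv.map_eq] at hf ⊢
  rw [setIntegral_map measurableSet_Ioi hf hasLaw_stdNormInv.aemeasurable,
    Measure.restrict_restrict' measurableSet_Ioo, hpre, intervalIntegral.integral_of_le hu.2.le,
    integral_Ioc_eq_integral_Ioo]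

theorem gaussianPDFReal_mul_exp_mul (c x : ℝ) :
    gaussianPDFReal 0 1 x * Real.exp (c * x) = Real.exp (c ^ 2 / 2) * gaussianPDFReal c 1 x := by
  simp only [gaussianPDFReal, NNReal.coe_one, mul_one]
  have hexp : -(x - 0) ^ 2 / 2 + c * x = c ^ 2 / 2 + -(x - c) ^ 2 / 2 := by ring
  rw [mul_assoc, ← Real.exp_add, hexp, Real.exp_add]
  ring

theorem setIntegral_Ioi_exp_mul_stdGaussian (a c : ℝ) :
    ∫ x in Ioi a, Real.exp (c * x) ∂γ = Real.exp (c ^ 2 / 2) * stdNormCdf (c - a) := by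
  have htilt : (gaussianReal c 1).real (Ioi a) = stdNormCdf (c - a) := by
    rw [← zero_add c, ← gaussianReal_map_add_const, map_measureReal_apply (by fun_prop)
      measurableSet_Ioi, preimage_add_const_Ioi, stdGaussian_real_Ioi, neg_sub, zero_add]
  rw [gaussianReal_of_var_ne_zero 0 one_ne_zero, gaussianPDF_def,
    setIntegral_withDensity_eq_setIntegral_toReal_smul (by fun_prop)
      (ae_of_all _ fun _ => ENNReal.ofReal_lt_top) _ measurableSet_Ioi]
  simp only [ENNReal.toReal_ofReal (gaussianPDFReal_nonneg _ _ _), smul_eq_mul,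
    gaussianPDFReal_mul_exp_mul]
  rw [integral_const_mul, ← htilt, measureReal_def, gaussianReal_apply_eq_integral c one_ne_zero,
    ENNReal.toReal_ofReal
      (setIntegral_nonneg measurableSet_Ioi fun _ _ => gaussianPDFReal_nonneg _ _ _)]

theorem ProbabilityTheory.HasLaw.rvCdf_eq {P : Measure Ω} {X : Ω → ℝ} {ν : Measure ℝ}
    (hX : HasLaw X ν P) (t : ℝ) : rvCdf P X t = ν.real (Iic t) :=
  hX.measureReal_eq measurableSet_Iic

theorem gaussianReal_eq_map_stdGaussian (μ σ : ℝ) :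
    gaussianReal μ ⟨σ ^ 2, sq_nonneg σ⟩ = (γ).map fun z => μ + σ * z := by
  have hscale := gaussianReal_map_const_mul (μ := 0) (v := 1) σ
  have hshift := gaussianReal_map_const_add (μ := 0) (v := ⟨σ ^ 2, sq_nonneg σ⟩) μ
  rw [mul_zero, mul_one] at hscale
  rw [zero_add] at hshift
  have hcomp : (fun z => μ + σ * z) = (μ + ·) ∘ (σ * ·) := rfl
  rw [hcomp, ← Measure.map_map (by fun_prop) (by fun_prop), hscale]
  exact hshift.symm

section

variable {P : Measure Ω}

theorem IsUniform01.hasLaw {U : Ω → ℝ} (hU : IsUniform01 P U) :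
    HasLaw U (volume.restrict (Ioo 0 1)) P :=
  ⟨hU.1.aemeasurable, by rw [hU.2, Measure.restrict_congr_set Ioo_ae_eq_Icc]⟩

namespace IsLogNormalRV

variable {X : Ω → ℝ} {μ σ : ℝ}

theorem hasLaw (h : IsLogNormalRV P X μ σ) :
    HasLaw X ((γ).map fun z => Real.exp (μ + σ * z)) P := by
  refine ⟨h.1.aemeasurable, ?_⟩
  rw [h.2, gaussianReal_eq_map_stdGaussian, Measure.map_map (by fun_prop) (by fun_prop)]
  rfl

theorem leftInv_rvCdf (h : IsLogNormalRV P X μ σ) (hσ : 0 < σ) {q : ℝ} (hq : q ∈ Ioo 0 1) :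
    leftInv (rvCdf P X) q = Real.exp (μ + σ * stdNormInv q) := by
  refine leftInv_eq_of_forall_le_iff fun t => ?_
  rw [h.hasLaw.rvCdf_eq, map_measureReal_apply (by fun_prop) measurableSet_Iic]
  rcases le_or_gt t 0 with ht | ht
  · have hempty : (fun z => Real.exp (μ + σ * z)) ⁻¹' Iic t = ∅ :=
      eq_empty_of_forall_notMem fun z hz => (Real.exp_pos _).not_ge (le_trans hz ht)
    rw [hempty, measureReal_empty]
    exact iff_of_false (fun h => (Real.exp_pos _).not_ge (h.trans ht)) hq.1.not_ge
  · have hlog : ∀ z, Real.exp (μ + σ * z) ≤ t ↔ z ≤ (Real.log t - μ) / σ := fun z => by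
      rw [← Real.le_log_iff_exp_le ht, le_div_iff₀ hσ]
      constructor <;> intro <;> linarith
    have hIic : (fun z => Real.exp (μ + σ * z)) ⁻¹' Iic t = Iic ((Real.log t - μ) / σ) := by
      ext z
      exact hlog z
    rw [hIic, hlog, stdNormInv_le_iff hq]
    rfl

end IsLogNormalRV

end

/-- `F⁻¹(Φ z) + F⁻¹(1 - Φ z)` for `F` the cdf of `LN(μ, σ²)`. -/
def cmProfile (μ σ z : ℝ) : ℝ := Real.exp (μ + σ * z) + Real.exp (μ - σ * z)

section cmProfile

variable {μ σ : ℝ}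

theorem cmProfile_eq_cosh (z : ℝ) : cmProfile μ σ z = 2 * Real.exp μ * Real.cosh (σ * z) := by
  rw [cmProfile, Real.cosh_eq, sub_eq_add_neg, Real.exp_add, Real.exp_add, Real.exp_neg]
  ring

theorem continuous_cmProfile : Continuous (cmProfile μ σ) := by
  unfold cmProfile
  fun_prop

theorem cmProfile_le_cmProfile (hσ : 0 < σ) {x y : ℝ} :
    cmProfile μ σ x ≤ cmProfile μ σ y ↔ |x| ≤ |y| := by
  rw [cmProfile_eq_cosh, cmProfile_eq_cosh, mul_le_mul_iff_of_pos_left (by positivity),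
    Real.cosh_le_cosh, abs_mul, abs_mul, mul_le_mul_iff_of_pos_left (abs_pos.2 hσ.ne')]

theorem cmProfile_lt_cmProfile (hσ : 0 < σ) {x y : ℝ} :
    cmProfile μ σ x < cmProfile μ σ y ↔ |x| < |y| := by
  rw [cmProfile_eq_cosh, cmProfile_eq_cosh, mul_lt_mul_iff_of_pos_left (by positivity),
    Real.cosh_lt_cosh, abs_mul, abs_mul, mul_lt_mul_iff_of_pos_left (abs_pos.2 hσ.ne')]

theorem setIntegral_Ioi_cmProfile (μ σ a : ℝ) :
    ∫ x in Ioi a, cmProfile μ σ x ∂γ =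
      Real.exp (μ + σ ^ 2 / 2) * (stdNormCdf (-a - σ) + stdNormCdf (-a + σ)) := by
  have hsplit : cmProfile μ σ = fun x =>
      Real.exp μ * Real.exp (σ * x) + Real.exp μ * Real.exp (-σ * x) := by
    ext x
    rw [cmProfile, Real.exp_add, Real.exp_sub, neg_mul, Real.exp_neg, div_eq_mul_inv]
  have hint (c : ℝ) : IntegrableOn (fun x => Real.exp μ * Real.exp (c * x)) (Ioi a) γ :=
    ((integrable_exp_mul_gaussianReal c).const_mul _).integrableOn
  rw [hsplit, integral_add (hint σ) (hint (-σ)), integral_const_mul, integral_const_mul,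
    setIntegral_Ioi_exp_mul_stdGaussian, setIntegral_Ioi_exp_mul_stdGaussian, neg_sq, Real.exp_add,
    show σ - a = -a + σ by ring, show -σ - a = -a - σ by ring]
  ring

end cmProfile

section cmSum

variable {P : Measure Ω} {X₁ X₂ U : Ω → ℝ} {μ σ : ℝ}

theorem cmSum_ae_eq (hU : IsUniform01 P U) (hσ : 0 < σ) (h₁ : IsLogNormalRV P X₁ μ σ)
    (h₂ : IsLogNormalRV P X₂ μ σ) : cmSum P X₁ X₂ U =ᵐ[P] cmProfile μ σ ∘ stdNormInv ∘ U := by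
  have hU01 : ∀ᵐ ω ∂P, U ω ∈ Ioo 0 1 := ae_of_ae_map hU.hasLaw.aemeasurable
    (hU.hasLaw.map_eq ▸ ae_restrict_mem measurableSet_Ioo)
  filter_upwards [hU01] with ω hω
  have hω' : 1 - U ω ∈ Ioo 0 1 := ⟨by linarith [hω.2], by linarith [hω.1]⟩
  rw [cmSum, h₁.leftInv_rvCdf hσ hω, h₂.leftInv_rvCdf hσ hω', stdNormInv_one_sub hω, mul_neg,
    ← sub_eq_add_neg]
  rfl

theorem hasLaw_cmSum (hU : IsUniform01 P U) (hσ : 0 < σ) (h₁ : IsLogNormalRV P X₁ μ σ)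
    (h₂ : IsLogNormalRV P X₂ μ σ) : HasLaw (cmSum P X₁ X₂ U) ((γ).map (cmProfile μ σ)) P :=
  have hψ : HasLaw (cmProfile μ σ) ((γ).map (cmProfile μ σ)) γ :=
    ⟨continuous_cmProfile.aemeasurable, rfl⟩
  (hψ.comp (hasLaw_stdNormInv.comp hU.hasLaw)).congr (cmSum_ae_eq hU hσ h₁ h₂)

theorem leftInv_rvCdf_cmSum (hU : IsUniform01 P U) (hσ : 0 < σ) (h₁ : IsLogNormalRV P X₁ μ σ)
    (h₂ : IsLogNormalRV P X₂ μ σ) {q : ℝ} (hq : q ∈ Ioo 0 1) :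
    leftInv (rvCdf P (cmSum P X₁ X₂ U)) q = cmProfile μ σ (stdNormInv ((1 + q) / 2)) := by
  have hmid : (1 + q) / 2 ∈ Ioo 0 1 := ⟨by linarith [hq.1], by linarith [hq.2]⟩
  set b := stdNormInv ((1 + q) / 2)
  have hΦb : stdNormCdf b = (1 + q) / 2 := stdNormCdf_stdNormInv hmid
  have hb : 0 < b := by
    by_contra! hb
    have := (stdNormInv_le_iff hmid 0).1 hb
    rw [stdNormCdf_zero] at this
    linarith [hq.1]
  refine leftInv_eq_of_forall_le_iff fun t => ?_
  rw [(hasLaw_cmSum hU hσ h₁ h₂).rvCdf_eq,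
    map_measureReal_apply continuous_cmProfile.measurable measurableSet_Iic]
  constructor
  · intro ht
    have hsub : Ioc (-b) b ⊆ cmProfile μ σ ⁻¹' Iic t := fun x hx =>
      ((cmProfile_le_cmProfile hσ).2
        (by rw [abs_of_pos hb]; exact abs_le.2 ⟨hx.1.le, hx.2⟩)).trans ht
    calc q = (γ).real (Ioc (-b) b) := by rw [stdGaussian_real_Ioc_neg hb.le, hΦb]; ring
      _ ≤ _ := measureReal_mono hsub
  · intro hqt
    by_contra! ht
    obtain ⟨c, ⟨hc0, hcb⟩, htc⟩ : ∃ c ∈ Ioo 0 b, t < cmProfile μ σ c :=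
      (Filter.Eventually.and (Ioo_mem_nhdsLT hb) (nhdsWithin_le_nhds
        (continuous_cmProfile.continuousAt.eventually (lt_mem_nhds ht)))).exists
    have hsub : cmProfile μ σ ⁻¹' Iic t ⊆ Ioc (-c) c := fun x hx => by
      have hxc := (cmProfile_lt_cmProfile hσ).1 (lt_of_le_of_lt hx htc)
      rw [abs_of_pos hc0, abs_lt] at hxc
      exact ⟨hxc.1, hxc.2.le⟩
    have hle := (measureReal_mono hsub).trans_eq (stdGaussian_real_Ioc_neg hc0.le)
    linarith [strictMono_stdNormCdf hcb]

end cmSum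

theorem lognormal_cm_sum_TVaR_general
    (P : Measure Ω)
    (X₁ X₂ U : Ω → ℝ) (μ σ : ℝ) (hσ : 0 < σ)
    (h₁ : IsLogNormalRV P X₁ μ σ) (h₂ : IsLogNormalRV P X₂ μ σ)
    (hU : IsUniform01 P U)
    (p : ℝ) (hp : p ∈ Ioo (0:ℝ) 1) :
    TVaR P (cmSum P X₁ X₂ U) p =
      2 * Real.exp (μ + σ ^ 2 / 2) / (1 - p) *
        (stdNormCdf (stdNormInv ((1 - p) / 2) - σ) +
          stdNormCdf (stdNormInv ((1 - p) / 2) + σ)) := by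
  obtain ⟨hp0, hp1⟩ := hp
  have hmid : (1 + p) / 2 ∈ Ioo 0 1 := ⟨by linarith, by linarith⟩
  have hquantile : ∫ q in p..1, leftInv (rvCdf P (cmSum P X₁ X₂ U)) q =
      ∫ q in p..1, cmProfile μ σ (stdNormInv ((1 + q) / 2)) := by
    simp only [intervalIntegral.integral_of_le hp1.le, integral_Ioc_eq_integral_Ioo]
    exact setIntegral_congr_fun measurableSet_Ioo fun q hq =>
      leftInv_rvCdf_cmSum hU hσ h₁ h₂ ⟨hp0.trans hq.1, hq.2⟩
  have hsubst : ∫ q in p..1, cmProfile μ σ (stdNormInv ((1 + q) / 2)) =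
      2 * ∫ r in (1 + p) / 2..1, cmProfile μ σ (stdNormInv r) := by
    simp only [add_div (1 : ℝ)]
    rw [intervalIntegral.integral_comp_add_div (fun r => cmProfile μ σ (stdNormInv r)) two_ne_zero,
      add_halves, smul_eq_mul]
  have hneg : stdNormInv ((1 - p) / 2) = -stdNormInv ((1 + p) / 2) := by
    rw [← stdNormInv_one_sub hmid]
    congr 1
    ring
  rw [TVaR, hquantile, hsubst, integral_stdNormInv_eq_setIntegral_Ioi hmid
    continuous_cmProfile.aestronglyMeasurable, setIntegral_Ioi_cmProfile, hneg]
  field_simp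

/-- TVaR of the counter-monotonic sum of two identically distributed
log-normal risks. -/
theorem lognormal_cm_sum_TVaR
    (P : Measure Ω) [IsProbabilityMeasure P]
    (X₁ X₂ U : Ω → ℝ) (μ σ : ℝ) (hσ : 0 < σ)
    (h₁ : IsLogNormalRV P X₁ μ σ) (h₂ : IsLogNormalRV P X₂ μ σ)
    (hU : IsUniform01 P U)
    (p : ℝ) (hp : p ∈ Ioo (0:ℝ) 1) :
    TVaR P (cmSum P X₁ X₂ U) p =
      2 * Real.exp (μ + σ ^ 2 / 2) / (1 - p) *
        (stdNormCdf (stdNormInv ((1 - p) / 2) - σ) +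
          stdNormCdf (stdNormInv ((1 - p) / 2) + σ)) :=
  lognormal_cm_sum_TVaR_general P X₁ X₂ U μ σ hσ h₁ h₂ hU p hp

end
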